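/- arXiv:2005.13450 — 4 statements merged into one kernel-verified Lean document; each statement's English description precedes it below -/
import Mathlib

section
/- Let κ > 0, γ_L = 3, and ν = 3a + b with a ≥ 0, 0 ≤ b < 3, ν < κ. Define F_U = (κ−ν)(κ−ν−1)(κ−2) and F_B = (κ−ν)(κ−ν−1)(κ−2a−[b>1]−2) + (κ−ν)(a+[b>1])(κ−2a−[b>1]−1) + a(κ−ν)(κ−2a−[b>1]−1) + a(κ−ν)(κ−2a−[b>1]), with [b>1] equal to 1 if b > 1 and 0 otherwise. Then F_U ≤ F_B. -/
/-- Proposition 2: for `γ_L = 3`, `ν = 3a + b < κ`, the unbalanced 6-cycle count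
is at most the balanced one. `[b>1]` is the indicator of `b > 1`. -/
theorem stmt_0 (κ a b : ℤ) (hκ : 0 < κ) (ha : 0 ≤ a) (hb0 : 0 ≤ b) (hb : b < 3)
    (hν : 3 * a + b < κ) :
    (κ - (3*a+b)) * (κ - (3*a+b) - 1) * (κ - 2) ≤
      (κ - (3*a+b)) * (κ - (3*a+b) - 1) * (κ - 2*a - (if b > 1 then 1 else 0) - 2)
      + (κ - (3*a+b)) * (a + (if b > 1 then 1 else 0)) * (κ - 2*a - (if b > 1 then 1 else 0) - 1)
      + a * (κ - (3*a+b)) * (κ - 2*a - (if b > 1 then 1 else 0) - 1)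
      + a * (κ - (3*a+b)) * (κ - 2*a - (if b > 1 then 1 else 0)) := by
  rcases lt_or_ge 1 b with h | h
  · simp only [if_pos h]
    nlinarith [mul_nonneg (sub_nonneg.2 hν.le) ha, sq_nonneg (κ - (3*a+b)),
      mul_nonneg (mul_nonneg (sub_nonneg.2 hν.le) ha) (sub_nonneg.2 hν.le)]
  · simp only [if_neg (not_lt.2 h)]
    nlinarith [mul_nonneg (sub_nonneg.2 hν.le) ha, sq_nonneg (κ - (3*a+b)),
      mul_nonneg (mul_nonneg (sub_nonneg.2 hν.le) ha) (sub_nonneg.2 hν.le)]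
end

section
/- Let γ_L = 3, κ > 0, ν = 3a + b with 0 ≤ b < 3 and ν < κ. The balanced protograph matrix B_B (a 3 × κ binary matrix obtained by concatenating an all-ones 3 × (κ−ν) block, the matrix S(3,b), and the blocks Q(3,a;2), Q(3,a;1), Q(3,a;0)) has pairwise row overlap parameters t_{0,1} = κ−2a−b, t_{0,2} = κ−2a−[b>0], t_{1,2} = κ−2a−[b>1], and triple overlap t_{0,1,2} = κ−ν, where [P] = 1 if P holds and 0 otherwise. -/
/-!
Every column of `B_B` contains at most one zero, and row `i < 3` contains exactly
`a + [i < b]` zeros: one in the `S(3,b)` block when `i < b`, and the `a` columns of its own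
`Q` block. Hence the columns where some row of `I` vanishes are the disjoint union of the zero
sets of the rows in `I`, so `t_I = κ - ∑_{i ∈ I} (a + [i < b])`; since `b ≤ 2`, this gives
the four values.
-/

open Finset

theorem card_filter_forall_eq_card_sub_sum {ι α : Type*} (C : Finset α) (I : Finset ι)
    (P : ι → α → Prop) [∀ i j, Decidable (P i j)]
    (hP : ∀ j ∈ C, ∀ i ∈ I, ∀ i' ∈ I, ¬P i j → ¬P i' j → i = i') :
    #{j ∈ C | ∀ i ∈ I, P i j} = #C - ∑ i ∈ I, #{j ∈ C | ¬P i j} := by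
  classical
  have hfails : {j ∈ C | ¬∀ i ∈ I, P i j} = I.biUnion fun i => {j ∈ C | ¬P i j} := by
    ext j
    simp only [mem_filter, mem_biUnion, not_forall, exists_prop]
    tauto
  have hdisj : (I : Set ι).PairwiseDisjoint fun i => {j ∈ C | ¬P i j} :=
    fun i hi i' hi' hne => disjoint_left.2 fun j hj hj' =>
      hne (hP j (mem_filter.1 hj).1 i hi i' hi' (mem_filter.1 hj).2 (mem_filter.1 hj').2)
  have hsplit := card_filter_add_card_filter_not (s := C) fun j => ∀ i ∈ I, P i j
  rw [hfails, card_biUnion hdisj] at hsplit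
  omega

def balancedProtograph (κ a b : ℕ) (i j : ℕ) : ℕ :=
  if j < κ - (3 * a + b) then 1
  else if j < κ - (3 * a + b) + b then (if i = b - (j - (κ - (3 * a + b))) - 1 then 0 else 1)
  else if j < κ - (3 * a + b) + b + a then (if i = 2 then 0 else 1)
  else if j < κ - (3 * a + b) + b + 2 * a then (if i = 1 then 0 else 1)
  else (if i = 0 then 0 else 1)

namespace balancedProtograph

variable {κ a b : ℕ}

theorem eq_of_ne_one {i i' j : ℕ} (h : balancedProtograph κ a b i j ≠ 1)
    (h' : balancedProtograph κ a b i' j ≠ 1) : i = i' := by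
  unfold balancedProtograph at h h'
  split_ifs at h h' <;> omega

theorem card_ne_one (hν : 3 * a + b ≤ κ) {i : ℕ} (hi : i < 3) :
    #{j ∈ range κ | balancedProtograph κ a b i j ≠ 1} = a + if i < b then 1 else 0 := by
  have hzeros : {j ∈ range κ | balancedProtograph κ a b i j ≠ 1} =
      (if i < b then {κ - (3 * a + b) + (b - 1 - i)} else ∅) ∪
        Ico (κ - (3 * a + b) + b + (2 - i) * a) (κ - (3 * a + b) + b + (2 - i) * a + a) := by
    ext j
    simp only [mem_filter, mem_range, mem_union, mem_Ico]
    unfold balancedProtograph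
    obtain rfl | rfl | rfl : i = 0 ∨ i = 1 ∨ i = 2 := by omega
    all_goals
      split_ifs <;>
        simp only [mem_singleton, notMem_empty, Nat.reduceSub, one_mul, ne_eq, not_true_eq_false,
          and_false, and_true, false_or, false_iff, zero_ne_one, not_false_eq_true] <;>
        first | contradiction | omega
  rw [hzeros, card_union_of_disjoint, Nat.card_Ico, Nat.add_sub_cancel_left]
  · split_ifs <;> simp [add_comm]
  · split_ifs
    · simp only [disjoint_singleton_left, mem_Ico]
      omega
    · exact disjoint_empty_left _

theorem card_forall_eq_one (hν : 3 * a + b ≤ κ) (I : Finset ℕ) (hI : ∀ i ∈ I, i < 3) :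
    #{j ∈ range κ | ∀ i ∈ I, balancedProtograph κ a b i j = 1} =
      κ - ∑ i ∈ I, (a + if i < b then 1 else 0) := by
  rw [card_filter_forall_eq_card_sub_sum (range κ) I (fun i j => balancedProtograph κ a b i j = 1)
    fun j _ i _ i' _ => eq_of_ne_one, card_range, sum_congr rfl fun i hi => card_ne_one hν (hI i hi)]

theorem card_and_eq_one (hν : 3 * a + b ≤ κ) {i₁ i₂ : ℕ} (h₁ : i₁ < 3) (h₂ : i₂ < 3)
    (hne : i₁ ≠ i₂) :
    #{j ∈ range κ | balancedProtograph κ a b i₁ j = 1 ∧ balancedProtograph κ a b i₂ j = 1} =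
      κ - 2 * a - ((if i₁ < b then 1 else 0) + if i₂ < b then 1 else 0) := by
  have h := card_forall_eq_one hν {i₁, i₂} (by simp [h₁, h₂])
  simp only [forall_mem_insert, mem_singleton, forall_eq, sum_pair hne] at h
  omega

end balancedProtograph

theorem stmt_3_general (κ a b : ℕ) (hb : b < 3) (hν : 3 * a + b < κ) :
    let ν := 3 * a + b
    -- balanced matrix: all-ones block, then S(3,b), then Q(3,a;2), Q(3,a;1), Q(3,a;0)
    let BB : ℕ → ℕ → ℕ := fun i j =>
      if j < κ - ν then 1
      else if j < κ - ν + b then (if i = b - (j - (κ - ν)) - 1 then 0 else 1)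
      else if j < κ - ν + b + a then (if i = 2 then 0 else 1)
      else if j < κ - ν + b + 2 * a then (if i = 1 then 0 else 1)
      else (if i = 0 then 0 else 1)
    let t2 : ℕ → ℕ → ℕ := fun i₁ i₂ =>
      ((Finset.range κ).filter (fun j => BB i₁ j = 1 ∧ BB i₂ j = 1)).card
    let t3 : ℕ :=
      ((Finset.range κ).filter (fun j => BB 0 j = 1 ∧ BB 1 j = 1 ∧ BB 2 j = 1)).card
    t2 0 1 = κ - 2 * a - b ∧
    t2 0 2 = κ - 2 * a - (if 0 < b then 1 else 0) ∧
    t2 1 2 = κ - 2 * a - (if 1 < b then 1 else 0) ∧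
    t3 = κ - ν := by
  intro ν BB t2 t3
  have hpair {i₁ i₂ : ℕ} (h₁ : i₁ < 3) (h₂ : i₂ < 3) (hne : i₁ ≠ i₂) :
      t2 i₁ i₂ = κ - 2 * a - ((if i₁ < b then 1 else 0) + if i₂ < b then 1 else 0) :=
    balancedProtograph.card_and_eq_one hν.le h₁ h₂ hne
  have htriple : t3 = κ - ∑ i ∈ {0, 1, 2}, (a + if i < b then 1 else 0) := by
    rw [← balancedProtograph.card_forall_eq_one hν.le {0, 1, 2} (by simp)]
    simp only [t3, forall_mem_insert, mem_singleton, forall_eq]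
    rfl
  refine ⟨?_, ?_, ?_, ?_⟩
  · rw [hpair (by norm_num) (by norm_num) (by norm_num)]
    split_ifs <;> omega
  · rw [hpair (by norm_num) (by norm_num) (by norm_num)]
    split_ifs <;> omega
  · rw [hpair (by norm_num) (by norm_num) (by norm_num)]
    split_ifs <;> omega
  · rw [htriple, sum_insert (by decide), sum_pair (by decide)]
    split_ifs <;> omega

/-- Overlap parameters of the balanced 3×κ protograph `B_B`. -/
theorem stmt_3 (κ a b : ℕ) (hκ : 0 < κ) (hb : b < 3) (hν : 3 * a + b < κ) :
    let ν := 3 * a + b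
    -- balanced matrix: all-ones block, then S(3,b), then Q(3,a;2), Q(3,a;1), Q(3,a;0)
    let BB : ℕ → ℕ → ℕ := fun i j =>
      if j < κ - ν then 1
      else if j < κ - ν + b then (if i = b - (j - (κ - ν)) - 1 then 0 else 1)
      else if j < κ - ν + b + a then (if i = 2 then 0 else 1)
      else if j < κ - ν + b + 2 * a then (if i = 1 then 0 else 1)
      else (if i = 0 then 0 else 1)
    let t2 : ℕ → ℕ → ℕ := fun i₁ i₂ =>
      ((Finset.range κ).filter (fun j => BB i₁ j = 1 ∧ BB i₂ j = 1)).card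
    let t3 : ℕ :=
      ((Finset.range κ).filter (fun j => BB 0 j = 1 ∧ BB 1 j = 1 ∧ BB 2 j = 1)).card
    t2 0 1 = κ - 2 * a - b ∧
    t2 0 2 = κ - 2 * a - (if 0 < b then 1 else 0) ∧
    t2 1 2 = κ - 2 * a - (if 1 < b then 1 else 0) ∧
    t3 = κ - ν :=
  stmt_3_general κ a b hb hν
end

section
/- In the balanced matrix B_B with parameters γ_L, κ, ν = a·γ_L + b (0 ≤ b < γ_L, ν < κ), every row contains either a or a+1 zeros; specifically, rows 0,…,b−1 contain a+1 zeros each and rows b,…,γ_L−1 contain a zeros each. -/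
/-!
Split the columns of `B_B` into its three blocks. The all-ones block contributes no zero. In the
`S` block the zeros lie on the antidiagonal, so row `i` meets exactly one of them when `i < b` and
none otherwise. In the `Q` block, column `t` is zero exactly in row `γ_L - 1 - t / a`, so each row
meets the `a` columns of one `Q(γ_L, a; ·)` block.
-/

open Finset

/-- `B_B`, parametrised by the number `c = κ - ν` of leading all-ones columns. -/
def balancedMatrix (γ a b c : ℕ) (i j : ℕ) : ℕ :=
  if j < c then 1
  else if j < c + b then (if i = b - (j - c) - 1 then 0 else 1)
  else (if i = γ - 1 - ((j - (c + b)) / a) then 0 else 1)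

theorem Finset.card_filter_range_add (p : ℕ → Prop) [DecidablePred p] (m n : ℕ) :
    #{j ∈ range (m + n) | p j} = #{j ∈ range m | p j} + #{k ∈ range n | p (m + k)} := by
  simp only [card_filter, sum_range_add]

theorem card_filter_range_eq_sub_sub_one (b i : ℕ) :
    #{s ∈ range b | i = b - s - 1} = if i < b then 1 else 0 := by
  split_ifs with hi
  · rw [card_eq_one]
    exact ⟨b - 1 - i, by ext s; simp only [mem_filter, mem_range, mem_singleton]; omega⟩
  · rw [card_eq_zero, filter_eq_empty_iff]
    intro s hs
    have hsb := mem_range.mp hs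
    omega

theorem card_filter_range_mul_div_eq (a n q : ℕ) (hq : q < n) :
    #{t ∈ range (a * n) | t / a = q} = a := by
  rcases Nat.eq_zero_or_pos a with rfl | ha
  · simp
  have hfilter : {t ∈ range (a * n) | t / a = q} = Ico (q * a) (q * a + a) := by
    have hqa : q * a + a ≤ a * n := by nlinarith
    ext t
    simp only [mem_filter, mem_range, mem_Ico, Nat.div_eq_iff ha]
    omega
  rw [hfilter, Nat.card_Ico]
  omega

theorem card_filter_balancedMatrix_eq_zero (γ a b c i : ℕ) (hi : i < γ) :
    #{j ∈ range (c + b + a * γ) | balancedMatrix γ a b c i j = 0} = if i < b then a + 1 else a := by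
  rw [card_filter_range_add, card_filter_range_add]
  have hones : #{j ∈ range c | balancedMatrix γ a b c i j = 0} = 0 := by
    rw [card_eq_zero, filter_eq_empty_iff]
    intro j hj
    simp [balancedMatrix, mem_range.mp hj]
  have hS : #{s ∈ range b | balancedMatrix γ a b c i (c + s) = 0} = if i < b then 1 else 0 := by
    rw [← card_filter_range_eq_sub_sub_one]
    refine congrArg card (filter_congr fun s hs => ?_)
    simp [balancedMatrix, mem_range.mp hs]
  have hQ : #{t ∈ range (a * γ) | balancedMatrix γ a b c i (c + b + t) = 0} = a := by
    refine (congrArg card (filter_congr fun t ht => ?_)).trans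
      (card_filter_range_mul_div_eq a γ (γ - 1 - i) (by omega))
    have htγ : t / a < γ := Nat.div_lt_of_lt_mul (mem_range.mp ht)
    have hrow : i = γ - 1 - t / a ↔ t / a = γ - 1 - i := by omega
    rw [balancedMatrix, if_neg (by omega), if_neg (by omega), Nat.add_sub_cancel_left]
    simp [hrow]
  rw [hones, hS, hQ]
  split_ifs <;> omega

theorem stmt_6_general (γL κ a b : ℕ) (hν : a * γL + b < κ) :
    let ν := a * γL + b
    let BB : ℕ → ℕ → ℕ := fun i j =>
      if j < κ - ν then 1
      else if j < κ - ν + b then (if i = b - (j - (κ - ν)) - 1 then 0 else 1)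
      else (if i = γL - 1 - ((j - (κ - ν + b)) / a) then 0 else 1)
    ∀ i < γL,
      ((Finset.range κ).filter (fun j => BB i j = 0)).card = if i < b then a + 1 else a := by
  intro ν BB i hi
  have hκ : κ = κ - ν + b + a * γL := by omega
  rw [hκ]
  exact card_filter_balancedMatrix_eq_zero γL a b (κ - ν) i hi

/-- In `B_B`, rows `0,…,b−1` contain `a+1` zeros and rows `b,…,γ_L−1` contain `a` zeros. -/
theorem stmt_6 (γL κ a b : ℕ) (hγ : 0 < γL) (hb : b < γL) (hν : a * γL + b < κ) :
    let ν := a * γL + b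
    let BB : ℕ → ℕ → ℕ := fun i j =>
      if j < κ - ν then 1
      else if j < κ - ν + b then (if i = b - (j - (κ - ν)) - 1 then 0 else 1)
      else (if i = γL - 1 - ((j - (κ - ν + b)) / a) then 0 else 1)
    ∀ i < γL,
      ((Finset.range κ).filter (fun j => BB i j = 0)).card = if i < b then a + 1 else a :=
  stmt_6_general γL κ a b hν
end

section
/- Let a ≥ 0, b ∈ {0,1,2}, κ > 3a + b, and set ν = 3a + b, t₃ = κ − ν. Then A(t₃, κ−2a−b, κ−2a−[b>0], κ−2a−[b>1]) ≥ A(t₃, t₃, t₃, κ), where A(t₃, u, v, w) = t₃·[t₃−1]⁺·[w−2]⁺ + t₃·(v−t₃)·[w−1]⁺ + (u−t₃)·t₃·[w−1]⁺ + (u−t₃)·(v−t₃)·w, and [α]⁺ = max(α,0), [P] = 1 if P holds else 0. -/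
/-! The balanced parameters `(t, t, t, κ)` with `κ = u + v + w - 2t` have the same total as
`(t, u, v, w)`, and the difference of the two cycle counts factors as
`t ((u - t) + (v - t)) (w - t) + (u - t) (v - t) w`, which is nonnegative once `t` is a lower
bound for `u, v, w`. -/

/-- The 6-cycle counting function `A` of eq. (8). -/
def cycA (t u v w : ℤ) : ℤ :=
  t * max (t - 1) 0 * max (w - 2) 0 + t * (v - t) * max (w - 1) 0
    + (u - t) * t * max (w - 1) 0 + (u - t) * (v - t) * w

lemma cycA_eq_of_one_le {t w : ℤ} (u v : ℤ) (ht : 1 ≤ t) (htw : t ≤ w) :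
    cycA t u v w = t * (t - 1) * (w - 2) + t * (v - t) * (w - 1)
      + (u - t) * t * (w - 1) + (u - t) * (v - t) * w := by
  have hfirst : max (t - 1) 0 * max (w - 2) 0 = (t - 1) * (w - 2) := by
    -- for `t = 1` the factor `t - 1` vanishes, so `w = 1` (where `max (w - 2) 0 ≠ w - 2`) is harmless
    rcases eq_or_lt_of_le ht with rfl | ht'
    · simp
    · rw [max_eq_left (by omega), max_eq_left (by omega)]
  rw [cycA, mul_assoc t, hfirst, max_eq_left (by omega : (0 : ℤ) ≤ w - 1)]
  ring

lemma cycA_sub_cycA_balanced {t u v w : ℤ} (ht : 1 ≤ t) (htu : t ≤ u) (htv : t ≤ v)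
    (htw : t ≤ w) :
    cycA t u v w - cycA t t t (u + v + w - 2 * t)
      = t * ((u - t) + (v - t)) * (w - t) + (u - t) * (v - t) * w := by
  rw [cycA_eq_of_one_le u v ht htw, cycA_eq_of_one_le t t ht (by omega)]
  ring

lemma cycA_balanced_le {t u v w : ℤ} (κ : ℤ) (ht : 1 ≤ t) (htu : t ≤ u) (htv : t ≤ v)
    (htw : t ≤ w) (hκ : κ = u + v + w - 2 * t) : cycA t t t κ ≤ cycA t u v w := by
  have hdiff := cycA_sub_cycA_balanced ht htu htv htw
  rw [← hκ] at hdiff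
  have hw : 0 ≤ w := by omega
  have : 0 ≤ t * ((u - t) + (v - t)) * (w - t) + (u - t) * (v - t) * w := by
    have : 0 ≤ u - t := by omega
    have : 0 ≤ v - t := by omega
    have : 0 ≤ w - t := by omega
    positivity
  omega

/-- Proposition 2 in terms of `A`: balanced count ≥ unbalanced count, for `γ_L = 3`. -/
theorem stmt_12 (a b κ : ℤ) (ha : 0 ≤ a) (hb0 : 0 ≤ b) (hb : b < 3)
    (hκ : 3 * a + b < κ) :
    let ν := 3 * a + b
    let t₃ := κ - ν
    cycA t₃ (κ - 2*a - b) (κ - 2*a - (if 0 < b then 1 else 0))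
        (κ - 2*a - (if 1 < b then 1 else 0))
      ≥ cycA t₃ t₃ t₃ κ := by
  dsimp only
  -- `b = [b > 0] + [b > 1]` exactly when `b ∈ {0, 1, 2}`
  obtain ⟨hb_eq, hqp, hq⟩ : (if 0 < b then 1 else 0) + (if 1 < b then 1 else 0) = b ∧
      (if 1 < b then 1 else 0 : ℤ) ≤ (if 0 < b then 1 else 0) ∧
      (0 : ℤ) ≤ (if 1 < b then 1 else 0) := by
    split_ifs <;> omega
  generalize (if 0 < b then 1 else 0 : ℤ) = p at *
  generalize (if 1 < b then 1 else 0 : ℤ) = q at *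
  exact cycA_balanced_le κ (by omega) (by omega) (by omega) (by omega) (by omega)
end
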